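/- Fix integers g₀ ≥ 1 and g ∈ {2g₀, 2g₀+1}, with λ = 2g₀. Let M₀ = [[0, Id_{g₀}],[Id_{g₀}, 0]] and let M be the g × g block-diagonal matrix with blocks M₀ and 0. Let A ∈ GL(g, ℤ) satisfy A M Aᵀ ≡ M (mod 2). Suppose β ∈ ℤ^g has the form β = (β₀, β₁) with β₁ ∈ ℤ^{g-λ} and β₁ ≡ 0 (mod 2). Define β̃ = A β - (1/2)·diag(A M Aᵀ) and write β̃ = (β̃₀, β̃₁) accordingly. Then β̃₁ ≡ 0 (mod 2) and β̃₀ᵀ M₀ β̃₀ ≡ β₀ᵀ M₀ β₀ (mod 4). -/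

import Mathlib

open Matrix

/-- The standard orthosymmetric matrix of size `g` with `λ = 2 * l0`:
block `[[0, Id],[Id, 0]]` in the upper-left `2*l0` corner, zero elsewhere. -/
def Mstd (g l0 : ℕ) : Matrix (Fin g) (Fin g) ℤ :=
  Matrix.of fun i j =>
    if ((i : ℕ) + l0 = (j : ℕ) ∧ (j : ℕ) < 2 * l0) ∨
       ((j : ℕ) + l0 = (i : ℕ) ∧ (i : ℕ) < 2 * l0) then 1 else 0

namespace Stmt2Aux

/-! ### Generic structure matrices over a commutative ring -/

variable (R : Type*) [CommRing R]

def MR (g l0 : ℕ) : Matrix (Fin g) (Fin g) R :=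
  Matrix.of fun i j =>
    if ((i : ℕ) + l0 = (j : ℕ) ∧ (j : ℕ) < 2 * l0) ∨
       ((j : ℕ) + l0 = (i : ℕ) ∧ (i : ℕ) < 2 * l0) then 1 else 0

def UR (g l0 : ℕ) : Matrix (Fin g) (Fin g) R :=
  Matrix.of fun i j =>
    if (i : ℕ) + l0 = (j : ℕ) ∧ (j : ℕ) < 2 * l0 then 1 else 0

def DR (g l0 : ℕ) : Matrix (Fin g) (Fin g) R :=
  Matrix.of fun i j => if i = j ∧ (i : ℕ) < 2 * l0 then 1 else 0

/-! ### partial permutation matrices -/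

def pmat {g : ℕ} (p : Fin g → Prop) [DecidablePred p] (f : Fin g → Fin g) :
    Matrix (Fin g) (Fin g) R :=
  Matrix.of fun i j => if p i ∧ f i = j then 1 else 0

variable {R}

lemma pmat_mul {g : ℕ} (p q : Fin g → Prop) [DecidablePred p] [DecidablePred q]
    (f h : Fin g → Fin g) :
    (pmat R p f) * (pmat R q h) = pmat R (fun i => p i ∧ q (f i)) (fun i => h (f i)) := by
  ext i j
  simp only [pmat, Matrix.mul_apply, Matrix.of_apply]
  rw [Finset.sum_eq_single (f i)]
  · by_cases hp : p i
    · by_cases hq : q (f i) <;> by_cases hh : h (f i) = j <;> simp [hp, hq, hh]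
    · simp [hp]
  · intro k _ hk
    have : ¬ (p i ∧ f i = k) := fun hc => hk (hc.2.symm)
    simp [this]
  · simp

lemma pmat_congr {g : ℕ} (p q : Fin g → Prop) [DecidablePred p] [DecidablePred q]
    (f h : Fin g → Fin g) (hpq : ∀ i, p i ↔ q i) (hfh : ∀ i, p i → f i = h i) :
    pmat R p f = pmat R q h := by
  ext i j
  simp only [pmat, Matrix.of_apply]
  by_cases hp : p i
  · rw [hfh i hp]
    simp [hp, (hpq i).mp hp]
  · have hq : ¬ q i := fun hq => hp ((hpq i).mpr hq)
    simp [hp, hq]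

lemma pmat_mulVec {g : ℕ} (p : Fin g → Prop) [DecidablePred p] (f : Fin g → Fin g)
    (v : Fin g → R) (i : Fin g) :
    ((pmat R p f).mulVec v) i = if p i then v (f i) else 0 := by
  simp only [pmat, Matrix.mulVec, dotProduct, Matrix.of_apply]
  rw [Finset.sum_eq_single (f i)]
  · by_cases hp : p i <;> simp [hp]
  · intro k _ hk
    have : ¬ (p i ∧ f i = k) := fun hc => hk (hc.2.symm)
    simp [this]
  · simp

/-! ### the index permutation -/

def fM (g l0 : ℕ) (h : 2 * l0 ≤ g) : Fin g → Fin g := fun i =>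
  if h1 : (i : ℕ) < l0 then ⟨(i : ℕ) + l0, by omega⟩
  else if h2 : (i : ℕ) < 2 * l0 then ⟨(i : ℕ) - l0, by have := i.isLt; omega⟩
  else i

lemma fM_spec (g l0 : ℕ) (h : 2 * l0 ≤ g) (i : Fin g) :
    ((i : ℕ) < l0 ∧ ((fM g l0 h i : Fin g) : ℕ) = (i : ℕ) + l0) ∨
    (l0 ≤ (i : ℕ) ∧ (i : ℕ) < 2 * l0 ∧ ((fM g l0 h i : Fin g) : ℕ) = (i : ℕ) - l0) ∨
    (2 * l0 ≤ (i : ℕ) ∧ fM g l0 h i = i) := by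
  unfold fM
  split_ifs with h1 h2
  · left; exact ⟨h1, rfl⟩
  · right; left; exact ⟨by omega, h2, rfl⟩
  · right; right; exact ⟨by omega, rfl⟩

variable (R) in
lemma MR_eq (g l0 : ℕ) (h : 2 * l0 ≤ g) :
    MR R g l0 = pmat R (fun i => (i : ℕ) < 2 * l0) (fM g l0 h) := by
  ext i j
  simp only [MR, pmat, Matrix.of_apply]
  have key : (((i : ℕ) + l0 = (j : ℕ) ∧ (j : ℕ) < 2 * l0) ∨
      ((j : ℕ) + l0 = (i : ℕ) ∧ (i : ℕ) < 2 * l0)) ↔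
      ((i : ℕ) < 2 * l0 ∧ fM g l0 h i = j) := by
    rw [Fin.ext_iff]
    rcases fM_spec g l0 h i with ⟨h1, h2⟩ | ⟨h1, h2, h3⟩ | ⟨h1, h2⟩
    · rw [h2]; omega
    · rw [h3]; omega
    · rw [h2]; omega
  rw [if_congr key rfl rfl]

variable (R) in
lemma UR_eq (g l0 : ℕ) (h : 2 * l0 ≤ g) :
    UR R g l0 = pmat R (fun i => (i : ℕ) < l0) (fM g l0 h) := by
  ext i j
  simp only [UR, pmat, Matrix.of_apply]
  have key : ((i : ℕ) + l0 = (j : ℕ) ∧ (j : ℕ) < 2 * l0) ↔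
      ((i : ℕ) < l0 ∧ fM g l0 h i = j) := by
    rw [Fin.ext_iff]
    rcases fM_spec g l0 h i with ⟨h1, h2⟩ | ⟨h1, h2, h3⟩ | ⟨h1, h2⟩
    · rw [h2]; omega
    · rw [h3]; omega
    · rw [h2]; omega
  rw [if_congr key rfl rfl]

variable (R) in
lemma URT_eq (g l0 : ℕ) (h : 2 * l0 ≤ g) :
    (UR R g l0)ᵀ = pmat R (fun i => l0 ≤ (i : ℕ) ∧ (i : ℕ) < 2 * l0) (fM g l0 h) := by
  ext i j
  simp only [UR, pmat, Matrix.transpose_apply, Matrix.of_apply]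
  have key : ((j : ℕ) + l0 = (i : ℕ) ∧ (i : ℕ) < 2 * l0) ↔
      ((l0 ≤ (i : ℕ) ∧ (i : ℕ) < 2 * l0) ∧ fM g l0 h i = j) := by
    rw [Fin.ext_iff]
    rcases fM_spec g l0 h i with ⟨h1, h2⟩ | ⟨h1, h2, h3⟩ | ⟨h1, h2⟩
    · rw [h2]; omega
    · rw [h3]; omega
    · rw [h2]; omega
  rw [if_congr key rfl rfl]

variable (R) in
lemma DR_eq (g l0 : ℕ) :
    DR R g l0 = pmat R (fun i => (i : ℕ) < 2 * l0) id := by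
  ext i j
  simp only [DR, pmat, Matrix.of_apply, id]
  have key : (i = j ∧ (i : ℕ) < 2 * l0) ↔ ((i : ℕ) < 2 * l0 ∧ i = j) := and_comm
  rw [if_congr key rfl rfl]

section Structural

variable (R) (g l0 : ℕ)

lemma fM_lt (h : 2 * l0 ≤ g) (i : Fin g) (hi : (i : ℕ) < 2 * l0) : ((fM g l0 h i : Fin g) : ℕ) < 2 * l0 := by
  rcases fM_spec g l0 h i with ⟨h1, h2⟩ | ⟨h1, h2, h3⟩ | ⟨h1, h2⟩ <;> omega

lemma fM_invol (h : 2 * l0 ≤ g) (i : Fin g) (hi : (i : ℕ) < 2 * l0) : fM g l0 h (fM g l0 h i) = i := by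
  apply Fin.ext
  rcases fM_spec g l0 h i with ⟨h1, h2⟩ | ⟨h1, h2, h3⟩ | ⟨h1, h2⟩
  · rcases fM_spec g l0 h (fM g l0 h i) with ⟨h1', h2'⟩ | ⟨h1', h2', h3'⟩ | ⟨h1', h2'⟩ <;> omega
  · rcases fM_spec g l0 h (fM g l0 h i) with ⟨h1', h2'⟩ | ⟨h1', h2', h3'⟩ | ⟨h1', h2'⟩ <;> omega
  · omega

lemma MR_symm : (MR R g l0)ᵀ = MR R g l0 := by
  ext i j
  simp only [MR, Matrix.transpose_apply, Matrix.of_apply]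
  rw [if_congr or_comm rfl rfl]

lemma DR_symm : (DR R g l0)ᵀ = DR R g l0 := by
  ext i j
  simp only [DR, Matrix.transpose_apply, Matrix.of_apply]
  have : (j = i ∧ (j : ℕ) < 2 * l0) ↔ (i = j ∧ (i : ℕ) < 2 * l0) := by
    constructor
    · rintro ⟨rfl, hh⟩; exact ⟨rfl, hh⟩
    · rintro ⟨rfl, hh⟩; exact ⟨rfl, hh⟩
  rw [if_congr this rfl rfl]

lemma MR_add : MR R g l0 = UR R g l0 + (UR R g l0)ᵀ := by
  ext i j
  simp only [MR, UR, Matrix.add_apply, Matrix.transpose_apply, Matrix.of_apply]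
  by_cases h1 : (i : ℕ) + l0 = (j : ℕ) ∧ (j : ℕ) < 2 * l0 <;>
    by_cases h2 : (j : ℕ) + l0 = (i : ℕ) ∧ (i : ℕ) < 2 * l0
  · omega
  · simp [h1, h2]
  · simp [h1, h2]
  · simp [h1, h2]

lemma MM_eq (h : 2 * l0 ≤ g) : MR R g l0 * MR R g l0 = DR R g l0 := by
  rw [MR_eq R g l0 h, pmat_mul, DR_eq]
  apply pmat_congr
  · intro i
    constructor
    · rintro ⟨h1, _⟩; exact h1
    · intro h1; exact ⟨h1, fM_lt g l0 h i h1⟩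
  · intro i hi; exact fM_invol g l0 h i hi.1

lemma DM_eq (h : 2 * l0 ≤ g) : DR R g l0 * MR R g l0 = MR R g l0 := by
  rw [MR_eq R g l0 h, DR_eq, pmat_mul]
  apply pmat_congr
  · intro i; simp only [id]; tauto
  · intro i _; rfl

lemma MD_eq (h : 2 * l0 ≤ g) : MR R g l0 * DR R g l0 = MR R g l0 := by
  rw [MR_eq R g l0 h, DR_eq, pmat_mul]
  apply pmat_congr
  · intro i
    constructor
    · rintro ⟨h1, _⟩; exact h1
    · intro h1; exact ⟨h1, fM_lt g l0 h i h1⟩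
  · intro i _; rfl

lemma DU_eq (h : 2 * l0 ≤ g) : DR R g l0 * UR R g l0 = UR R g l0 := by
  rw [UR_eq R g l0 h, DR_eq, pmat_mul]
  apply pmat_congr
  · intro i; simp only [id]; constructor
    · rintro ⟨_, h2⟩; exact h2
    · intro h1; exact ⟨by omega, h1⟩
  · intro i _; rfl

lemma UD_eq (h : 2 * l0 ≤ g) : UR R g l0 * DR R g l0 = UR R g l0 := by
  rw [UR_eq R g l0 h, DR_eq, pmat_mul]
  apply pmat_congr
  · intro i
    constructor
    · rintro ⟨h1, _⟩; exact h1
    · intro h1; exact ⟨h1, fM_lt g l0 h i (by omega)⟩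
  · intro i _; rfl

lemma DD_eq : DR R g l0 * DR R g l0 = DR R g l0 := by
  rw [DR_eq, pmat_mul]
  apply pmat_congr
  · intro i; simp only [id]; tauto
  · intro i _; rfl

lemma MUM_eq (h : 2 * l0 ≤ g) : MR R g l0 * UR R g l0 * MR R g l0 = (UR R g l0)ᵀ := by
  rw [URT_eq R g l0 h, MR_eq R g l0 h, UR_eq R g l0 h, pmat_mul, pmat_mul]
  apply pmat_congr
  · intro i
    constructor
    · rintro ⟨⟨h1, h2⟩, _⟩
      refine ⟨?_, h1⟩
      rcases fM_spec g l0 h i with ⟨h1', h2'⟩ | ⟨h1', h2', h3'⟩ | ⟨h1', h2'⟩ <;> omega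
    · rintro ⟨h1, h2⟩
      have hlt : ((fM g l0 h i : Fin g) : ℕ) < l0 := by
        rcases fM_spec g l0 h i with ⟨h1', h2'⟩ | ⟨h1', h2', h3'⟩ | ⟨h1', h2'⟩ <;> omega
      exact ⟨⟨h2, hlt⟩, fM_lt g l0 h _ (by omega)⟩
  · intro i hi
    rw [fM_invol g l0 h i hi.1.1]

lemma UR_diag (i : Fin g) : UR R g l0 i i = 0 := by
  simp only [UR, Matrix.of_apply]
  rw [if_neg]
  omega

lemma DR_mul_apply (X : Matrix (Fin g) (Fin g) R) (i j : Fin g) :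
    (DR R g l0 * X) i j = if (i : ℕ) < 2 * l0 then X i j else 0 := by
  rw [DR_eq]
  simp only [Matrix.mul_apply, pmat, Matrix.of_apply]
  rw [Finset.sum_eq_single i]
  · by_cases hp : (i : ℕ) < 2 * l0 <;> simp [hp]
  · intro k _ hk
    have h0 : ¬ ((i : ℕ) < 2 * l0 ∧ i = k) := fun hc => hk (hc.2.symm)
    simp only [id_eq]
    rw [if_neg h0, zero_mul]
  · simp

lemma mul_DR_apply (X : Matrix (Fin g) (Fin g) R) (i j : Fin g) :
    (X * DR R g l0) i j = if (j : ℕ) < 2 * l0 then X i j else 0 := by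
  simp only [Matrix.mul_apply, DR, Matrix.of_apply]
  rw [Finset.sum_eq_single j]
  · by_cases hp : (j : ℕ) < 2 * l0 <;> simp [hp]
  · intro k _ hk
    have : ¬ (k = j ∧ (k : ℕ) < 2 * l0) := fun hc => hk hc.1
    simp [this]
  · simp

lemma DR_mulVec (v : Fin g → R) (i : Fin g) :
    ((DR R g l0).mulVec v) i = if (i : ℕ) < 2 * l0 then v i else 0 := by
  rw [DR_eq]
  exact pmat_mulVec _ _ _ _

end Structural

/-! ### generic bilinear algebra -/

section Bilin

variable {g : ℕ}

lemma dot_swap (X : Matrix (Fin g) (Fin g) R) (a c : Fin g → R) :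
    a ⬝ᵥ X.mulVec c = c ⬝ᵥ Xᵀ.mulVec a := by
  rw [Matrix.dotProduct_mulVec, Matrix.mulVec_transpose, dotProduct_comm]

lemma quad_mulVec (X G : Matrix (Fin g) (Fin g) R) (x : Fin g → R) :
    (G.mulVec x) ⬝ᵥ X.mulVec (G.mulVec x) = x ⬝ᵥ (Gᵀ * X * G).mulVec x := by
  have h1 : (Gᵀ * X * G).mulVec x = Gᵀ.mulVec (X.mulVec (G.mulVec x)) := by
    rw [← Matrix.mulVec_mulVec, ← Matrix.mulVec_mulVec]
  rw [h1, dot_swap Gᵀ x (X.mulVec (G.mulVec x)), Matrix.transpose_transpose,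
    dotProduct_comm]

lemma qadd (U : Matrix (Fin g) (Fin g) R) (x y : Fin g → R) :
    (x + y) ⬝ᵥ U.mulVec (x + y) =
      x ⬝ᵥ U.mulVec x + y ⬝ᵥ U.mulVec y + x ⬝ᵥ (U + Uᵀ).mulVec y := by
  have hyx : y ⬝ᵥ U.mulVec x = x ⬝ᵥ Uᵀ.mulVec y := dot_swap U y x
  rw [Matrix.mulVec_add, dotProduct_add, add_dotProduct,
    add_dotProduct, Matrix.add_mulVec, dotProduct_add, hyx]
  abel

end Bilin

/-! ### diagonal extraction in characteristic two -/

lemma sum_sum_eq_diag {M : Type*} [AddCommMonoid M] {n : ℕ} (f : Fin n → Fin n → M)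
    (hf : ∀ i j, i ≠ j → f i j + f j i = 0) :
    (∑ i, ∑ j, f i j) = ∑ i, f i i := by
  classical
  have key : ∀ s : Finset (Fin n),
      (∑ i ∈ s, ∑ j ∈ s, f i j) = ∑ i ∈ s, f i i := by
    intro s
    induction s using Finset.induction_on with
    | empty => simp
    | @insert a s ha ih =>
        rw [Finset.sum_insert ha, Finset.sum_insert ha, Finset.sum_insert ha]
        have h2 : ∑ i ∈ s, ∑ j ∈ insert a s, f i j
            = ∑ i ∈ s, f i a + ∑ i ∈ s, ∑ j ∈ s, f i j := by
          rw [← Finset.sum_add_distrib]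
          exact Finset.sum_congr rfl fun i hi => Finset.sum_insert ha
        rw [h2, ih]
        have h3 : ∑ j ∈ s, f a j + ∑ i ∈ s, f i a = 0 := by
          rw [← Finset.sum_add_distrib]
          refine Finset.sum_eq_zero fun j hj => hf a j ?_
          rintro rfl; exact ha hj
        rw [add_assoc, ← add_assoc (∑ j ∈ s, f a j), h3, zero_add]
  exact key Finset.univ

/-! ### characteristic two: quadratic forms -/

lemma F2_mul_self : ∀ a : ZMod 2, a * a = a := by decide

lemma F2_add_self : ∀ a : ZMod 2, a + a = 0 := by decide

lemma quad_diag {n : ℕ} (Z : Matrix (Fin n) (Fin n) (ZMod 2)) (hZ : Zᵀ = Z)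
    (x : Fin n → ZMod 2) :
    x ⬝ᵥ Z.mulVec x = (fun i => Z i i) ⬝ᵥ x := by
  have expand : x ⬝ᵥ Z.mulVec x = ∑ i, ∑ j, x i * (Z i j * x j) := by
    simp [dotProduct, Matrix.mulVec, Finset.mul_sum]
  rw [expand, sum_sum_eq_diag]
  · simp only [dotProduct]
    apply Finset.sum_congr rfl
    intro i _
    have h1 : x i * (Z i i * x i) = Z i i * (x i * x i) := by ring
    rw [h1, F2_mul_self (x i)]
  · intro i j hij
    have hzz : Z j i = Z i j := by
      conv_lhs => rw [← hZ]
      rw [Matrix.transpose_apply]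
    rw [hzz]
    have h2 : x i * (Z i j * x j) + x j * (Z i j * x i)
        = x i * (Z i j * x j) + x i * (Z i j * x j) := by ring
    rw [h2, F2_add_self]

lemma matrix_add_self {n : ℕ} (X : Matrix (Fin n) (Fin n) (ZMod 2)) : X + X = 0 := by
  ext i j
  exact F2_add_self _

lemma qlaw {n : ℕ} (U M : Matrix (Fin n) (Fin n) (ZMod 2)) (hM : M = U + Uᵀ)
    (hUdiag : ∀ i, U i i = 0) (G : Matrix (Fin n) (Fin n) (ZMod 2)) (hG : Gᵀ * M * G = M)
    (x : Fin n → ZMod 2) :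
    (G.mulVec x) ⬝ᵥ U.mulVec (G.mulVec x)
      = x ⬝ᵥ U.mulVec x + (fun i => (Gᵀ * U * G) i i) ⬝ᵥ x := by
  have ht : (Gᵀ * U * G + U)ᵀ = Gᵀ * Uᵀ * G + Uᵀ := by
    rw [Matrix.transpose_add, Matrix.transpose_mul, Matrix.transpose_mul,
      Matrix.transpose_transpose, Matrix.mul_assoc]
  have hkey : (Gᵀ * U * G + U) + (Gᵀ * U * G + U)ᵀ = 0 := by
    rw [ht]
    have h3 : (Gᵀ * U * G + U) + (Gᵀ * Uᵀ * G + Uᵀ) = Gᵀ * (U + Uᵀ) * G + (U + Uᵀ) := by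
      rw [Matrix.mul_add, Matrix.add_mul]
      abel
    rw [h3, ← hM, hG, matrix_add_self]
  have hZsym : (Gᵀ * U * G + U)ᵀ = Gᵀ * U * G + U := by
    have h4 : (Gᵀ * U * G + U)ᵀ = -(Gᵀ * U * G + U) :=
      eq_neg_of_add_eq_zero_right hkey
    rw [h4]
    ext i j
    simp only [Matrix.neg_apply]
    exact neg_eq_of_add_eq_zero_left (F2_add_self _)
  have e1 : (G.mulVec x) ⬝ᵥ U.mulVec (G.mulVec x) = x ⬝ᵥ (Gᵀ * U * G).mulVec x :=
    quad_mulVec U G x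
  have e2 : Gᵀ * U * G = U + (Gᵀ * U * G + U) := by
    have h5 : U + (Gᵀ * U * G + U) = Gᵀ * U * G + (U + U) := by abel
    rw [h5, matrix_add_self, add_zero]
  have e3 : x ⬝ᵥ (Gᵀ * U * G).mulVec x
      = x ⬝ᵥ U.mulVec x + x ⬝ᵥ (Gᵀ * U * G + U).mulVec x := by
    conv_lhs => rw [e2]
    rw [Matrix.add_mulVec, dotProduct_add]
  rw [e1, e3, quad_diag _ hZsym]
  have e4 : (fun i => (Gᵀ * U * G + U) i i) = (fun i => (Gᵀ * U * G) i i) := by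
    funext i
    simp [Matrix.add_apply, hUdiag i]
  rw [e4]

/-! ### the counting argument -/

def chi (a : ZMod 2) : ℤ := if a = 0 then 1 else -1

lemma chi_add : ∀ a b : ZMod 2, chi (a + b) = chi a * chi b := by decide

lemma chi_sq : ∀ a : ZMod 2, chi a * chi a = 1 := by decide

lemma chi_eq_one : ∀ a : ZMod 2, chi a = 1 → a = 0 := by decide

lemma F2_eq_one : ∀ a : ZMod 2, a ≠ 0 → a = 1 := by decide

lemma char_sum {n : ℕ} (v : Fin n → ZMod 2) (hv : v ≠ 0) :
    ∑ x : Fin n → ZMod 2, chi (x ⬝ᵥ v) = 0 := by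
  obtain ⟨j, hj⟩ : ∃ j, v j ≠ 0 := by
    by_contra hcon
    push_neg at hcon
    exact hv (funext hcon)
  have hvj : v j = 1 := F2_eq_one _ hj
  have hre : ∑ x : Fin n → ZMod 2, chi ((Pi.single j (1 : ZMod 2) + x) ⬝ᵥ v)
      = ∑ x : Fin n → ZMod 2, chi (x ⬝ᵥ v) := by
    have h := Equiv.sum_comp (Equiv.addLeft (Pi.single j (1 : ZMod 2)))
      (fun y : Fin n → ZMod 2 => chi (y ⬝ᵥ v))
    simpa using h
  have hpt : ∀ x : Fin n → ZMod 2,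
      chi ((Pi.single j (1 : ZMod 2) + x) ⬝ᵥ v) = - chi (x ⬝ᵥ v) := by
    intro x
    rw [add_dotProduct, single_dotProduct, hvj, one_mul, chi_add]
    have : chi (1 : ZMod 2) = -1 := rfl
    rw [this]
    ring
  rw [Finset.sum_congr rfl (fun x _ => hpt x), Finset.sum_neg_distrib] at hre
  omega

lemma chi_zero : chi 0 = 1 := rfl

lemma count_H1 {n : ℕ} (U M : Matrix (Fin n) (Fin n) (ZMod 2))
    (hMsym : Mᵀ = M) (hM : M = U + Uᵀ) (hMUM : M * U * M = Uᵀ) (hUMM : U * (M * M) = U)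
    (W Winv : Matrix (Fin n) (Fin n) (ZMod 2)) (hW : W * Winv = 1) (hW2 : Winv * W = 1)
    (σ : Fin n → ZMod 2)
    (hσq : ∀ x, (W.mulVec x) ⬝ᵥ U.mulVec (W.mulVec x) = x ⬝ᵥ U.mulVec x + σ ⬝ᵥ x)
    (hσD : (M * M).mulVec σ = σ) :
    σ ⬝ᵥ U.mulVec σ = 0 := by
  classical
  have hQM : ∀ x : Fin n → ZMod 2,
      (M.mulVec x) ⬝ᵥ U.mulVec (M.mulVec x) = x ⬝ᵥ U.mulVec x := by
    intro x
    rw [quad_mulVec, hMsym, hMUM]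
    exact (dot_swap U x x).symm
  have hshift : ∀ x : Fin n → ZMod 2,
      (x + M.mulVec σ) ⬝ᵥ U.mulVec (x + M.mulVec σ)
        = x ⬝ᵥ U.mulVec x + σ ⬝ᵥ U.mulVec σ + σ ⬝ᵥ x := by
    intro x
    rw [qadd, ← hM, hQM σ, Matrix.mulVec_mulVec, hσD, dotProduct_comm x σ]
  set T : ℤ := ∑ x : Fin n → ZMod 2, chi (x ⬝ᵥ U.mulVec x) with hT
  have hTT : T * T = ∑ z : Fin n → ZMod 2,
      (if M.mulVec z = 0 then (Fintype.card (Fin n → ZMod 2) : ℤ) else 0) := by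
    rw [hT, Finset.sum_mul_sum]
    have step1 : ∀ x : Fin n → ZMod 2,
        ∑ y : Fin n → ZMod 2, chi (x ⬝ᵥ U.mulVec x) * chi (y ⬝ᵥ U.mulVec y)
          = ∑ z : Fin n → ZMod 2, chi (z ⬝ᵥ U.mulVec z) * chi (x ⬝ᵥ M.mulVec z) := by
      intro x
      have h := Equiv.sum_comp (Equiv.addLeft x)
        (fun y : Fin n → ZMod 2 => chi (x ⬝ᵥ U.mulVec x) * chi (y ⬝ᵥ U.mulVec y))
      rw [← h]
      apply Finset.sum_congr rfl
      intro z _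
      have e7 : (Equiv.addLeft x z : Fin n → ZMod 2) = x + z := rfl
      rw [e7]
      have e8 : (x + z) ⬝ᵥ U.mulVec (x + z)
          = x ⬝ᵥ U.mulVec x + z ⬝ᵥ U.mulVec z + x ⬝ᵥ M.mulVec z := by
        rw [qadd, ← hM]
      rw [e8, chi_add, chi_add]
      have e9 : chi (x ⬝ᵥ U.mulVec x) * (chi (x ⬝ᵥ U.mulVec x) * chi (z ⬝ᵥ U.mulVec z)
            * chi (x ⬝ᵥ M.mulVec z))
          = (chi (x ⬝ᵥ U.mulVec x) * chi (x ⬝ᵥ U.mulVec x))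
            * (chi (z ⬝ᵥ U.mulVec z) * chi (x ⬝ᵥ M.mulVec z)) := by ring
      rw [e9, chi_sq, one_mul]
    rw [Finset.sum_congr rfl (fun x _ => step1 x), Finset.sum_comm]
    apply Finset.sum_congr rfl
    intro z _
    rw [← Finset.mul_sum]
    by_cases hz : M.mulVec z = 0
    · rw [if_pos hz]
      have hQz : z ⬝ᵥ U.mulVec z = 0 := by
        have hUz : U.mulVec z = 0 := by
          have h1 : U.mulVec z = ((U * M) * M).mulVec z := by
            rw [Matrix.mul_assoc, hUMM]
          rw [h1, ← Matrix.mulVec_mulVec, ← Matrix.mulVec_mulVec, hz,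
            Matrix.mulVec_zero, Matrix.mulVec_zero]
        rw [hUz, dotProduct_zero]
      have hsum : ∑ x : Fin n → ZMod 2, chi (x ⬝ᵥ M.mulVec z)
          = (Fintype.card (Fin n → ZMod 2) : ℤ) := by
        have hone : ∀ x : Fin n → ZMod 2, chi (x ⬝ᵥ M.mulVec z) = 1 := by
          intro x
          rw [hz, dotProduct_zero, chi_zero]
        rw [Finset.sum_congr rfl (fun x _ => hone x)]
        simp
      rw [hQz, chi_zero, one_mul, hsum]
    · rw [if_neg hz, char_sum _ hz, mul_zero]
  have hTpos : 0 < T * T := by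
    rw [hTT]
    apply Finset.sum_pos'
    · intro z _
      split
      · exact_mod_cast Nat.zero_le _
      · exact le_refl 0
    · refine ⟨0, Finset.mem_univ 0, ?_⟩
      rw [if_pos (Matrix.mulVec_zero M)]
      exact_mod_cast Fintype.card_pos
  have hTne : T ≠ 0 := by
    intro h0
    rw [h0, mul_zero] at hTpos
    exact lt_irrefl 0 hTpos
  have h1 : ∑ x : Fin n → ZMod 2, chi ((W.mulVec x) ⬝ᵥ U.mulVec (W.mulVec x)) = T := by
    have h := Equiv.sum_comp
      (⟨fun x => W.mulVec x, fun x => Winv.mulVec x,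
        fun x => by simp [Matrix.mulVec_mulVec, hW2, Matrix.one_mulVec],
        fun x => by simp [Matrix.mulVec_mulVec, hW, Matrix.one_mulVec]⟩ :
        (Fin n → ZMod 2) ≃ (Fin n → ZMod 2))
      (fun y : Fin n → ZMod 2 => chi (y ⬝ᵥ U.mulVec y))
    simpa using h
  have h2 : ∀ x : Fin n → ZMod 2, chi ((W.mulVec x) ⬝ᵥ U.mulVec (W.mulVec x))
      = chi (σ ⬝ᵥ U.mulVec σ) * chi ((x + M.mulVec σ) ⬝ᵥ U.mulVec (x + M.mulVec σ)) := by
    intro x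
    rw [hσq x]
    have e5 : x ⬝ᵥ U.mulVec x + σ ⬝ᵥ x
        = σ ⬝ᵥ U.mulVec σ + ((x + M.mulVec σ) ⬝ᵥ U.mulVec (x + M.mulVec σ)) := by
      rw [hshift x]
      have h6 := F2_add_self (σ ⬝ᵥ U.mulVec σ)
      linear_combination -h6
    rw [e5, chi_add]
  have h3 : ∑ x : Fin n → ZMod 2,
      chi ((x + M.mulVec σ) ⬝ᵥ U.mulVec (x + M.mulVec σ)) = T := by
    have h := Equiv.sum_comp (Equiv.addRight (M.mulVec σ))
      (fun y : Fin n → ZMod 2 => chi (y ⬝ᵥ U.mulVec y))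
    simpa using h
  have hTs : T = chi (σ ⬝ᵥ U.mulVec σ) * T := by
    conv_lhs => rw [← h1]
    rw [Finset.sum_congr rfl (fun x _ => h2 x), ← Finset.mul_sum, h3]
  have h7 : chi (σ ⬝ᵥ U.mulVec σ) * T = 1 * T := by rw [one_mul, ← hTs]
  exact chi_eq_one _ (mul_right_cancel₀ hTne h7)

/-! ### the key mod-2 computation -/

lemma key {g : ℕ} (l0 : ℕ)
    (M U D : Matrix (Fin g) (Fin g) (ZMod 2))
    (hMsym : Mᵀ = M) (hDsym : Dᵀ = D) (hMadd : M = U + Uᵀ)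
    (hMM : M * M = D) (hDM : D * M = M) (hMD : M * D = M)
    (hDU : D * U = U) (hUD : U * D = U) (hDD : D * D = D)
    (hMUM : M * U * M = Uᵀ) (hUdiag : ∀ i, U i i = 0)
    (hDmulE : ∀ (X : Matrix (Fin g) (Fin g) (ZMod 2)) (i j : Fin g),
      (D * X) i j = if (i : ℕ) < 2 * l0 then X i j else 0)
    (hmulDE : ∀ (X : Matrix (Fin g) (Fin g) (ZMod 2)) (i j : Fin g),
      (X * D) i j = if (j : ℕ) < 2 * l0 then X i j else 0)
    (hDmv : ∀ (v : Fin g → ZMod 2) (i : Fin g),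
      (D.mulVec v) i = if (i : ℕ) < 2 * l0 then v i else 0)
    (P Q' : Matrix (Fin g) (Fin g) (ZMod 2))
    (hPQ : P * Q' = 1) (hQP : Q' * P = 1) (hPM : P * M * Pᵀ = M)
    (b : Fin g → ZMod 2) (hb : ∀ i : Fin g, 2 * l0 ≤ (i : ℕ) → b i = 0) :
    (∀ j : Fin g, 2 * l0 ≤ (j : ℕ) →
      (P.mulVec b + fun i => (P * U * Pᵀ) i i) j = 0) ∧
    ((P.mulVec b + fun i => (P * U * Pᵀ) i i) ⬝ᵥ
        U.mulVec (P.mulVec b + fun i => (P * U * Pᵀ) i i)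
      = b ⬝ᵥ U.mulVec b) := by
  classical
  set σ : Fin g → ZMod 2 := fun i => (P * U * Pᵀ) i i with hσdef
  -- transposed inverses
  have hPtQt : Pᵀ * Q'ᵀ = 1 := by rw [← Matrix.transpose_mul, hQP, Matrix.transpose_one]
  have hQtPt : Q'ᵀ * Pᵀ = 1 := by rw [← Matrix.transpose_mul, hPQ, Matrix.transpose_one]
  -- Q' preserves M
  have hQM' : Q' * M * Q'ᵀ = M := by
    calc Q' * M * Q'ᵀ = Q' * (P * M * Pᵀ) * Q'ᵀ := by rw [hPM]
      _ = (Q' * P) * (M * (Pᵀ * Q'ᵀ)) := by simp only [Matrix.mul_assoc]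
      _ = M := by rw [hQP, hPtQt, Matrix.mul_one, Matrix.one_mul]
  -- relations of D with 1 - D
  have hEM : (1 - D) * M = 0 := by rw [Matrix.sub_mul, Matrix.one_mul, hDM, sub_self]
  have hME : M * (1 - D) = 0 := by rw [Matrix.mul_sub, Matrix.mul_one, hMD, sub_self]
  have hEU : (1 - D) * U = 0 := by rw [Matrix.sub_mul, Matrix.one_mul, hDU, sub_self]
  have hUE : U * (1 - D) = 0 := by rw [Matrix.mul_sub, Matrix.mul_one, hUD, sub_self]
  have hDE : D * (1 - D) = 0 := by rw [Matrix.mul_sub, Matrix.mul_one, hDD, sub_self]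
  have hED : (1 - D) * D = 0 := by rw [Matrix.sub_mul, Matrix.one_mul, hDD, sub_self]
  have hEE : (1 - D) * (1 - D) = 1 - D := by
    rw [Matrix.sub_mul, Matrix.one_mul, hDE, sub_zero]
  have hEsym : (1 - D)ᵀ = 1 - D := by
    rw [Matrix.transpose_sub, Matrix.transpose_one, hDsym]
  have hDUD : D * U * D = U := by rw [hDU, hUD]
  -- support of rows of P
  have hEPM : (1 - D) * P * M = 0 := by
    have h3 : ((1 - D) * (P * M * Pᵀ)) * Q'ᵀ = (1 - D) * P * M := by
      simp only [Matrix.mul_assoc, hPtQt, Matrix.mul_one]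
    have h2 : ((1 - D) * (P * M * Pᵀ)) * Q'ᵀ = 0 := by
      rw [hPM, hEM, Matrix.zero_mul]
    exact h3.symm.trans h2
  have hEPD : (1 - D) * P * D = 0 := by
    have h4 : (1 - D) * P * D = ((1 - D) * P * M) * M := by
      rw [Matrix.mul_assoc ((1 - D) * P) M M, hMM]
    rw [h4, hEPM, Matrix.zero_mul]
  have hEQM : (1 - D) * Q' * M = 0 := by
    have h3 : ((1 - D) * (Q' * M * Q'ᵀ)) * Pᵀ = (1 - D) * Q' * M := by
      simp only [Matrix.mul_assoc, hQtPt, Matrix.mul_one]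
    have h2 : ((1 - D) * (Q' * M * Q'ᵀ)) * Pᵀ = 0 := by
      rw [hQM', hEM, Matrix.zero_mul]
    exact h3.symm.trans h2
  have hEQD : (1 - D) * Q' * D = 0 := by
    have h4 : (1 - D) * Q' * D = ((1 - D) * Q' * M) * M := by
      rw [Matrix.mul_assoc ((1 - D) * Q') M M, hMM]
    rw [h4, hEQM, Matrix.zero_mul]
  have hPD : P * D = D * P * D := by
    have h5 : P * D = (D + (1 - D)) * P * D := by
      rw [add_sub_cancel, Matrix.one_mul]
    rw [h5, Matrix.add_mul, Matrix.add_mul, hEPD, add_zero]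
  have hQD : Q' * D = D * Q' * D := by
    have h5 : Q' * D = (D + (1 - D)) * Q' * D := by
      rw [add_sub_cancel, Matrix.one_mul]
    rw [h5, Matrix.add_mul, Matrix.add_mul, hEQD, add_zero]
  have hPDr : D * (P * D) = P * D := by rw [← Matrix.mul_assoc, ← hPD]
  have hQDr : D * (Q' * D) = Q' * D := by rw [← Matrix.mul_assoc, ← hQD]
  -- the block-truncated matrices
  set P₀ : Matrix (Fin g) (Fin g) (ZMod 2) := D * P * D + (1 - D) with hP₀def
  set Q₀ : Matrix (Fin g) (Fin g) (ZMod 2) := D * Q' * D + (1 - D) with hQ₀def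
  have hP₀D : P₀ * D = D * P * D := by
    rw [hP₀def, Matrix.add_mul, hED, add_zero, Matrix.mul_assoc (D * P) D D, hDD]
  have hDP₀ : D * P₀ = D * P * D := by
    rw [hP₀def, Matrix.mul_add, hDE, add_zero, ← Matrix.mul_assoc, ← Matrix.mul_assoc, hDD]
  have hQ₀D : Q₀ * D = D * Q' * D := by
    rw [hQ₀def, Matrix.add_mul, hED, add_zero, Matrix.mul_assoc (D * Q') D D, hDD]
  have hDQ₀ : D * Q₀ = D * Q' * D := by
    rw [hQ₀def, Matrix.mul_add, hDE, add_zero, ← Matrix.mul_assoc, ← Matrix.mul_assoc, hDD]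
  have hP₀Q₀ : P₀ * Q₀ = 1 := by
    have t1 : (D * P * D) * (D * Q' * D) = D := by
      calc (D * P * D) * (D * Q' * D) = D * P * (D * D) * Q' * D := by
            simp only [Matrix.mul_assoc]
        _ = D * P * (Q' * D) := by
            rw [hDD]; simp only [Matrix.mul_assoc]; rw [hQDr]
        _ = D * (P * Q') * D := by simp only [Matrix.mul_assoc]
        _ = D := by rw [hPQ, Matrix.mul_one, hDD]
    calc P₀ * Q₀ = (D * P * D) * (D * Q' * D) + (D * P * D) * (1 - D)
          + ((1 - D) * (D * Q' * D) + (1 - D) * (1 - D)) := by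
          rw [hP₀def, hQ₀def, Matrix.add_mul, Matrix.mul_add, Matrix.mul_add, add_assoc]
      _ = 1 := by
          rw [t1, hEE, Matrix.mul_assoc (D * P) D (1 - D), hDE, Matrix.mul_zero,
            ← Matrix.mul_assoc (1 - D) (D * Q') D, ← Matrix.mul_assoc, hED,
            Matrix.zero_mul, Matrix.zero_mul, add_zero, zero_add, add_sub_cancel]
  have hQ₀P₀ : Q₀ * P₀ = 1 := by
    have t1 : (D * Q' * D) * (D * P * D) = D := by
      calc (D * Q' * D) * (D * P * D) = D * Q' * (D * D) * P * D := by
            simp only [Matrix.mul_assoc]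
        _ = D * Q' * (P * D) := by
            rw [hDD]; simp only [Matrix.mul_assoc]; rw [hPDr]
        _ = D * (Q' * P) * D := by simp only [Matrix.mul_assoc]
        _ = D := by rw [hQP, Matrix.mul_one, hDD]
    calc Q₀ * P₀ = (D * Q' * D) * (D * P * D) + (D * Q' * D) * (1 - D)
          + ((1 - D) * (D * P * D) + (1 - D) * (1 - D)) := by
          rw [hQ₀def, hP₀def, Matrix.add_mul, Matrix.mul_add, Matrix.mul_add, add_assoc]
      _ = 1 := by
          rw [t1, hEE, Matrix.mul_assoc (D * Q') D (1 - D), hDE, Matrix.mul_zero,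
            ← Matrix.mul_assoc (1 - D) (D * P) D, ← Matrix.mul_assoc, hED,
            Matrix.zero_mul, Matrix.zero_mul, add_zero, zero_add, add_sub_cancel]
  have hP₀T : P₀ᵀ = D * Pᵀ * D + (1 - D) := by
    rw [hP₀def]
    simp only [Matrix.transpose_add, Matrix.transpose_sub, Matrix.transpose_one,
      Matrix.transpose_mul, hDsym, Matrix.mul_assoc]
  -- P₀ preserves M on both sides
  have hP₀M : P₀ * M * P₀ᵀ = M := by
    have s1 : P₀ * M = D * P * M := by
      rw [hP₀def, Matrix.add_mul, hEM, add_zero, Matrix.mul_assoc (D * P) D M, hDM]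
    have s2 : P₀ * M * P₀ᵀ = (D * P * M) * (D * Pᵀ * D) + (D * P * M) * (1 - D) := by
      rw [s1, hP₀T, Matrix.mul_add]
    have s3 : (D * P * M) * (1 - D) = 0 := by
      rw [Matrix.mul_assoc (D * P) M (1 - D), Matrix.mul_assoc D P (M * (1 - D)), hME,
        Matrix.mul_zero, Matrix.mul_zero]
    have s4 : (D * P * M) * (D * Pᵀ * D) = D * (P * M * Pᵀ) * D := by
      calc (D * P * M) * (D * Pᵀ * D) = D * P * (M * D) * Pᵀ * D := by
            simp only [Matrix.mul_assoc]
        _ = D * (P * M * Pᵀ) * D := by rw [hMD]; simp only [Matrix.mul_assoc]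
    rw [s2, s3, add_zero, s4, hPM]
    calc D * M * D = (D * M) * D := rfl
      _ = M := by rw [hDM, hMD]
  have hMPt0 : M * P₀ᵀ = Q₀ * M := by
    calc M * P₀ᵀ = (Q₀ * P₀) * (M * P₀ᵀ) := by rw [hQ₀P₀, Matrix.one_mul]
      _ = Q₀ * (P₀ * M * P₀ᵀ) := by simp only [Matrix.mul_assoc]
      _ = Q₀ * M := by rw [hP₀M]
  have hEP₀T : (1 - D) * P₀ᵀ = 1 - D := by
    rw [hP₀T, Matrix.mul_add, hEE, ← Matrix.mul_assoc, ← Matrix.mul_assoc, hED,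
      Matrix.zero_mul, Matrix.zero_mul, zero_add]
  have hPt0M : P₀ᵀ * M = M * Q₀ := by
    have s1 : D * P₀ᵀ = M * Q₀ * M := by
      calc D * P₀ᵀ = (M * M) * P₀ᵀ := by rw [hMM]
        _ = M * (M * P₀ᵀ) := by rw [Matrix.mul_assoc]
        _ = M * (Q₀ * M) := by rw [hMPt0]
        _ = M * Q₀ * M := by rw [Matrix.mul_assoc]
    calc P₀ᵀ * M = (D + (1 - D)) * P₀ᵀ * M := by rw [add_sub_cancel, Matrix.one_mul]
      _ = (D * P₀ᵀ) * M + ((1 - D) * P₀ᵀ) * M := by rw [Matrix.add_mul, Matrix.add_mul]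
      _ = (M * Q₀ * M) * M + (1 - D) * M := by rw [s1, hEP₀T]
      _ = M * Q₀ * (M * M) + 0 := by rw [hEM, Matrix.mul_assoc (M * Q₀) M M]
      _ = M * (Q₀ * D) := by rw [add_zero, hMM, Matrix.mul_assoc]
      _ = M * (D * Q₀) := by rw [hQ₀D, hDQ₀]
      _ = (M * D) * Q₀ := by rw [Matrix.mul_assoc]
      _ = M * Q₀ := by rw [hMD]
  have hPt0MP0 : P₀ᵀ * M * P₀ = M := by
    rw [hPt0M, Matrix.mul_assoc, hQ₀P₀, Matrix.mul_one]
  -- q-transformation laws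
  have hqP0 : ∀ x : Fin g → ZMod 2,
      (P₀.mulVec x) ⬝ᵥ U.mulVec (P₀.mulVec x)
        = x ⬝ᵥ U.mulVec x + (fun i => (P₀ᵀ * U * P₀) i i) ⬝ᵥ x :=
    fun x => qlaw U M hMadd hUdiag P₀ hPt0MP0 x
  have hqPt : ∀ x : Fin g → ZMod 2,
      (Pᵀ.mulVec x) ⬝ᵥ U.mulVec (Pᵀ.mulVec x) = x ⬝ᵥ U.mulVec x + σ ⬝ᵥ x := by
    intro x
    have h := qlaw U M hMadd hUdiag Pᵀ (by rw [Matrix.transpose_transpose]; exact hPM) x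
    rw [Matrix.transpose_transpose] at h
    exact h
  -- support of σ
  have hσ0 : ∀ i : Fin g, 2 * l0 ≤ (i : ℕ) → σ i = 0 := by
    intro i hi
    have hni : ¬ ((i : ℕ) < 2 * l0) := by omega
    have hEXE : (1 - D) * (P * U * Pᵀ) * (1 - D) = 0 := by
      have step : (1 - D) * (P * U * Pᵀ) * (1 - D)
          = ((1 - D) * P * D) * (U * (D * (Pᵀ * (1 - D)))) := by
        conv_lhs => rw [← hDUD]
        simp only [Matrix.mul_assoc]
      rw [step, hEPD, Matrix.zero_mul]
    have hent : ((1 - D) * (P * U * Pᵀ) * (1 - D)) i i = (P * U * Pᵀ) i i := by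
      have e1 : (1 - D) * (P * U * Pᵀ) * (1 - D)
          = (P * U * Pᵀ) - D * (P * U * Pᵀ) - (P * U * Pᵀ) * D
            + D * (P * U * Pᵀ) * D := by
        noncomm_ring
      rw [e1]
      simp only [Matrix.sub_apply, Matrix.add_apply, hDmulE, hmulDE, if_neg hni]
      ring
    have h0 : (P * U * Pᵀ) i i = 0 := by
      rw [← hent, hEXE, Matrix.zero_apply]
    rw [hσdef]
    exact h0
  have hDσ : D.mulVec σ = σ := by
    funext i
    rw [hDmv]
    by_cases hi : (i : ℕ) < 2 * l0
    · rw [if_pos hi]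
    · rw [if_neg hi, hσ0 i (by omega)]
  have hDb : D.mulVec b = b := by
    funext i
    rw [hDmv]
    by_cases hi : (i : ℕ) < 2 * l0
    · rw [if_pos hi]
    · rw [if_neg hi, hb i (by omega)]
  have hPb : P.mulVec b = P₀.mulVec b := by
    conv_lhs => rw [← hDb, Matrix.mulVec_mulVec, hPD]
    conv_rhs => rw [← hDb, Matrix.mulVec_mulVec, hP₀D]
  -- σ for P₀ᵀ
  have hP0U : P₀ * U = D * P * U := by
    rw [hP₀def, Matrix.add_mul, hEU, add_zero, Matrix.mul_assoc (D * P) D U, hDU]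
  have hUP0T : U * P₀ᵀ = U * Pᵀ * D := by
    rw [hP₀T, Matrix.mul_add, hUE, add_zero]
    calc U * (D * Pᵀ * D) = (U * D) * (Pᵀ * D) := by simp only [Matrix.mul_assoc]
      _ = U * Pᵀ * D := by rw [hUD, Matrix.mul_assoc]
  have hσ0mat : P₀ * U * P₀ᵀ = D * (P * U * Pᵀ) * D := by
    calc P₀ * U * P₀ᵀ = (D * P * U) * P₀ᵀ := by rw [hP0U]
      _ = D * P * (U * P₀ᵀ) := by simp only [Matrix.mul_assoc]
      _ = D * P * (U * Pᵀ * D) := by rw [hUP0T]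
      _ = D * (P * U * Pᵀ) * D := by simp only [Matrix.mul_assoc]
  have hσ0vec : (fun i => (P₀ * U * P₀ᵀ) i i) = σ := by
    funext i
    show (P₀ * U * P₀ᵀ) i i = σ i
    by_cases hi : (i : ℕ) < 2 * l0
    · rw [hσ0mat, hmulDE, if_pos hi, hDmulE, if_pos hi]
    · rw [hσ0mat, hmulDE, if_neg hi, hσ0 i (by omega)]
  have hqPt0 : ∀ x : Fin g → ZMod 2,
      (P₀ᵀ.mulVec x) ⬝ᵥ U.mulVec (P₀ᵀ.mulVec x) = x ⬝ᵥ U.mulVec x + σ ⬝ᵥ x := by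
    intro x
    have h := qlaw U M hMadd hUdiag P₀ᵀ
      (by rw [Matrix.transpose_transpose]; exact hP₀M) x
    rw [Matrix.transpose_transpose, hσ0vec] at h
    exact h
  have hQQM : ∀ x : Fin g → ZMod 2,
      (M.mulVec x) ⬝ᵥ U.mulVec (M.mulVec x) = x ⬝ᵥ U.mulVec x := by
    intro x
    rw [quad_mulVec, hMsym, hMUM]
    exact (dot_swap U x x).symm
  -- the functional equation relating σ and τ
  have hfun : ∀ x : Fin g → ZMod 2,
      σ ⬝ᵥ M.mulVec x = (fun i => (P₀ᵀ * U * P₀) i i) ⬝ᵥ Q₀.mulVec x := by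
    intro x
    have r1 : (Q₀.mulVec x) ⬝ᵥ U.mulVec (Q₀.mulVec x)
        = x ⬝ᵥ U.mulVec x + σ ⬝ᵥ M.mulVec x := by
      have hchain : P₀ᵀ.mulVec (M.mulVec x) = M.mulVec (Q₀.mulVec x) := by
        rw [Matrix.mulVec_mulVec, hPt0M, ← Matrix.mulVec_mulVec]
      have hA := hqPt0 (M.mulVec x)
      rw [hchain, hQQM (Q₀.mulVec x), hQQM x] at hA
      exact hA
    have r2 : x ⬝ᵥ U.mulVec x = (Q₀.mulVec x) ⬝ᵥ U.mulVec (Q₀.mulVec x)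
        + (fun i => (P₀ᵀ * U * P₀) i i) ⬝ᵥ Q₀.mulVec x := by
      have hB := hqP0 (Q₀.mulVec x)
      rw [Matrix.mulVec_mulVec, hP₀Q₀, Matrix.one_mulVec] at hB
      exact hB
    rw [r1, add_assoc] at r2
    have h0 : σ ⬝ᵥ M.mulVec x + (fun i => (P₀ᵀ * U * P₀) i i) ⬝ᵥ Q₀.mulVec x = 0 := by
      have h5 : x ⬝ᵥ U.mulVec x + 0 = x ⬝ᵥ U.mulVec x
          + (σ ⬝ᵥ M.mulVec x + (fun i => (P₀ᵀ * U * P₀) i i) ⬝ᵥ Q₀.mulVec x) := by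
        rw [add_zero]; exact r2
      exact (add_left_cancel h5).symm
    have h6 : σ ⬝ᵥ M.mulVec x = (σ ⬝ᵥ M.mulVec x
        + (fun i => (P₀ᵀ * U * P₀) i i) ⬝ᵥ Q₀.mulVec x)
        + (fun i => (P₀ᵀ * U * P₀) i i) ⬝ᵥ Q₀.mulVec x := by
      rw [add_assoc, F2_add_self, add_zero]
    rw [h6, h0, zero_add]
  constructor
  · intro j hj
    have hσj := hσ0 j hj
    have hPbj : (P.mulVec b) j = 0 := by
      have h1 : P.mulVec b = D.mulVec ((P * D).mulVec b) := by
        conv_lhs => rw [← hDb, Matrix.mulVec_mulVec, hPD, Matrix.mul_assoc,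
          ← Matrix.mulVec_mulVec]
      rw [h1, hDmv, if_neg (by omega : ¬ ((j : ℕ) < 2 * l0))]
    rw [Pi.add_apply, hPbj, hσj, add_zero]
  · rw [qadd U (P.mulVec b) σ, ← hMadd]
    have hUMM2 : U * (M * M) = U := by rw [hMM, hUD]
    have hσDmv : (M * M).mulVec σ = σ := by rw [hMM]; exact hDσ
    have hQσ : σ ⬝ᵥ U.mulVec σ = 0 :=
      count_H1 U M hMsym hMadd hMUM hUMM2 Pᵀ Q'ᵀ hPtQt hQtPt σ hqPt hσDmv
    rw [hQσ, add_zero]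
    have hsw : (P.mulVec b) ⬝ᵥ M.mulVec σ = σ ⬝ᵥ M.mulVec (P.mulVec b) := by
      rw [dot_swap M (P.mulVec b) σ, hMsym]
    rw [hsw, hPb]
    have hQ0P0b : Q₀.mulVec (P₀.mulVec b) = b := by
      rw [Matrix.mulVec_mulVec, hQ₀P₀, Matrix.one_mulVec]
    rw [hfun (P₀.mulVec b), hQ0P0b, hqP0 b, add_assoc, F2_add_self, add_zero]

/-! ### casting from ℤ to ZMod 2 -/

lemma cast_dot {g : ℕ} (a b : Fin g → ℤ) :
    ((a ⬝ᵥ b : ℤ) : ZMod 2)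
      = (fun i => ((a i : ℤ) : ZMod 2)) ⬝ᵥ (fun i => ((b i : ℤ) : ZMod 2)) := by
  simp [dotProduct]

lemma cast_mulVec {g : ℕ} (X : Matrix (Fin g) (Fin g) ℤ) (v : Fin g → ℤ) :
    (fun i => (((X.mulVec v) i : ℤ) : ZMod 2))
      = (X.map (Int.cast : ℤ → ZMod 2)).mulVec (fun i => ((v i : ℤ) : ZMod 2)) := by
  funext i
  simp [Matrix.mulVec, dotProduct, Matrix.map_apply]

lemma map_MR (g l0 : ℕ) :
    (MR ℤ g l0).map (Int.cast : ℤ → ZMod 2) = MR (ZMod 2) g l0 := by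
  ext i j
  simp [MR, Matrix.map_apply, apply_ite (Int.cast : ℤ → ZMod 2)]

lemma map_UR (g l0 : ℕ) :
    (UR ℤ g l0).map (Int.cast : ℤ → ZMod 2) = UR (ZMod 2) g l0 := by
  ext i j
  simp [UR, Matrix.map_apply, apply_ite (Int.cast : ℤ → ZMod 2)]

lemma map_mul' {g : ℕ} (X Y : Matrix (Fin g) (Fin g) ℤ) :
    (X * Y).map (Int.cast : ℤ → ZMod 2)
      = X.map (Int.cast : ℤ → ZMod 2) * Y.map (Int.cast : ℤ → ZMod 2) := by
  have h := Matrix.map_mul (L := X) (M := Y) (f := Int.castRingHom (ZMod 2))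
  simpa using h

lemma map_one' {g : ℕ} :
    (1 : Matrix (Fin g) (Fin g) ℤ).map (Int.cast : ℤ → ZMod 2) = 1 :=
  Matrix.map_one _ Int.cast_zero Int.cast_one

lemma map_transpose' {g : ℕ} (X : Matrix (Fin g) (Fin g) ℤ) :
    Xᵀ.map (Int.cast : ℤ → ZMod 2) = (X.map (Int.cast : ℤ → ZMod 2))ᵀ :=
  Matrix.transpose_map

end Stmt2Aux

open Stmt2Aux in
theorem stmt2 (g0 g : ℕ) (hg0 : 1 ≤ g0) (hg : g = 2 * g0 ∨ g = 2 * g0 + 1)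
    (A : Matrix (Fin g) (Fin g) ℤ) (hA : IsUnit A.det)
    (hAM : ∀ i j, (A * Mstd g g0 * Aᵀ) i j ≡ Mstd g g0 i j [ZMOD 2])
    (β : Fin g → ℤ) (hβ1 : ∀ j : Fin g, 2 * g0 ≤ (j : ℕ) → β j ≡ 0 [ZMOD 2])
    (βt : Fin g → ℤ)
    (hβt : ∀ i, 2 * βt i = 2 * (A.mulVec β) i - (A * Mstd g g0 * Aᵀ) i i) :
    (∀ j : Fin g, 2 * g0 ≤ (j : ℕ) → βt j ≡ 0 [ZMOD 2]) ∧
    βt ⬝ᵥ (Mstd g g0).mulVec βt ≡ β ⬝ᵥ (Mstd g g0).mulVec β [ZMOD 4] := by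
  have hg2 : 2 * g0 ≤ g := by rcases hg with h | h <;> omega
  have hMstd : Mstd g g0 = MR ℤ g g0 := rfl
  -- the integer vector s
  have hdiag : ∀ i, (A * Mstd g g0 * Aᵀ) i i = 2 * ((A * UR ℤ g g0 * Aᵀ) i i) := by
    intro i
    have h1 : A * Mstd g g0 * Aᵀ = A * UR ℤ g g0 * Aᵀ + A * (UR ℤ g g0)ᵀ * Aᵀ := by
      rw [hMstd, MR_add ℤ g g0, Matrix.mul_add, Matrix.add_mul]
    have h2 : A * (UR ℤ g g0)ᵀ * Aᵀ = (A * UR ℤ g g0 * Aᵀ)ᵀ := by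
      rw [Matrix.transpose_mul, Matrix.transpose_mul, Matrix.transpose_transpose]
      simp only [Matrix.mul_assoc]
    rw [h1, Matrix.add_apply, h2, Matrix.transpose_apply]
    ring
  have hβts : ∀ i, βt i = (A.mulVec β) i - (A * UR ℤ g g0 * Aᵀ) i i := by
    intro i
    have h1 := hβt i
    rw [hdiag i] at h1
    omega
  -- pass to ZMod 2
  set P : Matrix (Fin g) (Fin g) (ZMod 2) := A.map (Int.cast : ℤ → ZMod 2) with hPdef
  set Q' : Matrix (Fin g) (Fin g) (ZMod 2) := (A⁻¹).map (Int.cast : ℤ → ZMod 2) with hQdef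
  have hPQ : P * Q' = 1 := by
    rw [hPdef, hQdef, ← map_mul', Matrix.mul_nonsing_inv A hA, map_one']
  have hQP : Q' * P = 1 := by
    rw [hPdef, hQdef, ← map_mul', Matrix.nonsing_inv_mul A hA, map_one']
  have hPM : P * MR (ZMod 2) g g0 * Pᵀ = MR (ZMod 2) g g0 := by
    have hAMmap : (A * Mstd g g0 * Aᵀ).map (Int.cast : ℤ → ZMod 2)
        = (Mstd g g0).map (Int.cast : ℤ → ZMod 2) := by
      ext i j
      simp only [Matrix.map_apply]
      exact (ZMod.intCast_eq_intCast_iff _ _ _).mpr (hAM i j)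
    rw [map_mul', map_mul', map_transpose', hMstd, map_MR] at hAMmap
    exact hAMmap
  set b : Fin g → ZMod 2 := fun i => ((β i : ℤ) : ZMod 2) with hbdef
  have hbsupp : ∀ i : Fin g, 2 * g0 ≤ (i : ℕ) → b i = 0 := by
    intro i hi
    have h := (ZMod.intCast_eq_intCast_iff _ _ _).mpr (hβ1 i hi)
    simpa using h
  obtain ⟨K1, K2⟩ := key (g := g) g0 (MR (ZMod 2) g g0) (UR (ZMod 2) g g0)
    (DR (ZMod 2) g g0)
    (MR_symm _ g g0) (DR_symm _ g g0) (MR_add _ g g0) (MM_eq _ g g0 hg2)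
    (DM_eq _ g g0 hg2) (MD_eq _ g g0 hg2) (DU_eq _ g g0 hg2) (UD_eq _ g g0 hg2)
    (DD_eq _ g g0) (MUM_eq _ g g0 hg2) (UR_diag _ g g0)
    (DR_mul_apply _ g g0) (mul_DR_apply _ g g0) (DR_mulVec _ g g0)
    P Q' hPQ hQP hPM b hbsupp
  -- identify the reduction of βt
  have hβtv : (fun i => ((βt i : ℤ) : ZMod 2))
      = P.mulVec b + (fun i => (P * UR (ZMod 2) g g0 * Pᵀ) i i) := by
    have hAb : (fun i => (((A.mulVec β) i : ℤ) : ZMod 2)) = P.mulVec b := by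
      rw [cast_mulVec, hPdef, hbdef]
    have hs : ∀ i, (((A * UR ℤ g g0 * Aᵀ) i i : ℤ) : ZMod 2)
        = (P * UR (ZMod 2) g g0 * Pᵀ) i i := by
      intro i
      have h1 : (A * UR ℤ g g0 * Aᵀ).map (Int.cast : ℤ → ZMod 2)
          = P * UR (ZMod 2) g g0 * Pᵀ := by
        rw [map_mul', map_mul', map_transpose', map_UR, hPdef]
      rw [← h1]
      rfl
    funext i
    rw [hβts i, Pi.add_apply]
    push_cast
    rw [CharTwo.sub_eq_add]
    have h2 := congrFun hAb i
    push_cast at h2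
    rw [h2]
    have h3 := hs i
    push_cast at h3
    rw [h3]
  refine ⟨?_, ?_⟩
  · intro j hj
    have h0 : ((βt j : ℤ) : ZMod 2) = 0 := by
      have := congrFun hβtv j
      rw [this, K1 j hj]
    have := (ZMod.intCast_eq_intCast_iff (βt j) 0 2).mp (by simpa using h0)
    exact this
  · have hM2 : ∀ x : Fin g → ℤ,
        x ⬝ᵥ (Mstd g g0).mulVec x = 2 * (x ⬝ᵥ (UR ℤ g g0).mulVec x) := by
      intro x
      rw [hMstd, MR_add ℤ g g0, Matrix.add_mulVec, dotProduct_add,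
        ← dot_swap (UR ℤ g g0) x x]
      ring
    rw [hM2 βt, hM2 β]
    have hq2 : βt ⬝ᵥ (UR ℤ g g0).mulVec βt ≡ β ⬝ᵥ (UR ℤ g g0).mulVec β [ZMOD 2] := by
      apply (ZMod.intCast_eq_intCast_iff _ _ _).mp
      rw [cast_dot, cast_dot, cast_mulVec, cast_mulVec, map_UR, hβtv]
      exact K2
    rw [Int.modEq_iff_dvd] at hq2 ⊢
    obtain ⟨k, hk⟩ := hq2
    exact ⟨k, by linarith⟩
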